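/- arXiv:1605.01889 — 2 statements merged into one kernel-verified Lean document; each statement's English description precedes it below -/
import Mathlib

section
/- Corollary 2, normal baseline: Consider the linear regression model y_j = x_jᵀβ + ε_j, j = 1,…,n, with ε_j i.i.d. two-piece distributed with location 0, scale σ, baseline density the standard normal φ(z) = (2π)^{−1/2} exp(−z²/2), and parameterisation functions a(γ), b(γ), under the prior π(β,σ,γ) ∝ σ^{−q} π(γ) with q ≥ 0. If y does not lie in the column space of X, n > p + 1 − q, and condition (iii) holds (∫_Γ max(a(γ),b(γ))^{n+q−1}/(a(γ)+b(γ))^n π(γ) dγ < ∞), then the posterior is proper: ∫_Γ ∫_0^∞ ∫_{ℝ^p} ∏_{j=1}^n g(y_j − x_jᵀβ | σ, a(γ), b(γ); φ) · σ^{−q} π(γ) dβ dσ dγ < ∞. -/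
/-!
Fix `γ` and write `m = max (a γ) (b γ)`. Every factor of the two-piece likelihood is at most
`2 / (σ (a + b)) * φ (z / (σ m))`. Since `X` has full rank and `y` is not
in its column space, `‖y - X β‖² ≥ d² + λ ‖β - t‖²` with `d, λ > 0`, so the `β`-integral is
dominated by a Gaussian integral, leaving `σ ^ (p - n - q) exp (-d² / (2 (σ m)²))` up to factors
depending on `γ`. After the substitution `τ = m σ` the `σ`-integral is a constant independent of
`γ` (finite because the exponential vanishes to all orders at `0` and `p - n - q < -1`) times
`m ^ (n + q - 1) / (a + b) ^ n`, and condition (iii) bounds the remaining `γ`-integral.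
-/

open MeasureTheory

noncomputable def twoPiece (f : ℝ → ℝ) (σ a b : ℝ) (z : ℝ) : ℝ :=
  if z < 0 then 2 / (σ * (a + b)) * f (z / (σ * b))
  else 2 / (σ * (a + b)) * f (z / (σ * a))

noncomputable def baseline (z : ℝ) : ℝ := (2 * Real.pi) ^ (-(1 / 2 : ℝ)) * Real.exp (-z ^ 2 / 2)

open Real Set
open scoped Matrix

theorem LinearMap.exists_sq_add_le_norm_sub_sq {E F : Type*}
    [NormedAddCommGroup E] [InnerProductSpace ℝ E] [FiniteDimensional ℝ E]
    [NormedAddCommGroup F] [InnerProductSpace ℝ F]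
    {L : E →ₗ[ℝ] F} (hL : Function.Injective L) {y : F} (hy : y ∉ LinearMap.range L) :
    ∃ (t : E) (d lam : ℝ), 0 < d ∧ 0 < lam ∧ ∀ x, d ^ 2 + lam * ‖x - t‖ ^ 2 ≤ ‖y - L x‖ ^ 2 := by
  obtain ⟨K, hK, hKL⟩ := L.exists_antilipschitzWith (LinearMap.ker_eq_bot.mpr hL)
  set V := LinearMap.range L
  obtain ⟨t, ht⟩ : V.starProjection y ∈ V := V.starProjection_apply_mem y
  have hr : y - V.starProjection y ∈ Vᗮ := V.sub_starProjection_mem_orthogonal y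
  have hr0 : y - V.starProjection y ≠ 0 := fun h =>
    hy (sub_eq_zero.mp h ▸ V.starProjection_apply_mem y)
  refine ⟨t, ‖y - V.starProjection y‖, (K : ℝ)⁻¹ ^ 2, norm_pos_iff.mpr hr0, by positivity,
    fun x => ?_⟩
  have hpyth : ‖y - L x‖ ^ 2 = ‖y - V.starProjection y‖ ^ 2 + ‖L (t - x)‖ ^ 2 := by
    rw [show y - L x = (y - V.starProjection y) + L (t - x) by rw [map_sub, ht]; abel,
      norm_add_sq_real, Submodule.inner_left_of_mem_orthogonal (LinearMap.mem_range_self L _) hr]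
    ring
  have hanti : (K : ℝ)⁻¹ * ‖x - t‖ ≤ ‖L (t - x)‖ := by
    rw [inv_mul_le_iff₀ (by positivity), norm_sub_rev]
    simpa using hKL.le_mul_dist (t - x) 0
  nlinarith [pow_le_pow_left₀ (by positivity) hanti 2]

theorem Matrix.mulVec_injective_of_rank_eq {K m n : Type*} [Field K] [Fintype m] [Fintype n]
    {X : Matrix m n K} (hX : X.rank = Fintype.card n) : Function.Injective X.mulVec := by
  have h := LinearMap.finrank_range_add_finrank_ker X.mulVecLin
  rw [← Matrix.rank, hX, Module.finrank_fintype_fun_eq_card, add_eq_left,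
    Submodule.finrank_eq_zero, LinearMap.ker_eq_bot] at h
  exact h

theorem Matrix.exists_sq_add_le_sum_sq_sub_mulVec {m n : Type*} [Fintype m] [Fintype n]
    {X : Matrix m n ℝ} (hX : Function.Injective X.mulVec) {y : m → ℝ}
    (hy : y ∉ Set.range X.mulVec) :
    ∃ (t : n → ℝ) (d lam : ℝ), 0 < d ∧ 0 < lam ∧
      ∀ β, d ^ 2 + lam * ∑ i, (β i - t i) ^ 2 ≤ ∑ j, (y j - (X *ᵥ β) j) ^ 2 := by
  classical
  have hL : Function.Injective (toEuclideanLin X) := fun u v huv =>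
    WithLp.ofLp_injective 2 (hX (congrArg WithLp.ofLp huv))
  have hyL : WithLp.toLp 2 y ∉ LinearMap.range (toEuclideanLin X) := by
    rintro ⟨u, hu⟩
    exact hy ⟨WithLp.ofLp u, congrArg WithLp.ofLp hu⟩
  obtain ⟨t, d, lam, hd, hlam, h⟩ := LinearMap.exists_sq_add_le_norm_sub_sq hL hyL
  refine ⟨WithLp.ofLp t, d, lam, hd, hlam, fun β => ?_⟩
  simpa [EuclideanSpace.norm_sq_eq] using h (WithLp.toLp 2 β)

theorem twoPiece_nonneg {f : ℝ → ℝ} (hf : ∀ z, 0 ≤ f z) {σ a b : ℝ} (hσ : 0 ≤ σ)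
    (hab : 0 ≤ a + b) (z : ℝ) : 0 ≤ twoPiece f σ a b z := by
  unfold twoPiece
  split_ifs <;> exact mul_nonneg (by positivity) (hf _)

theorem twoPiece_le_of_abs_antitone {f : ℝ → ℝ} (hf : ∀ x z, |x| ≤ |z| → f z ≤ f x)
    {σ a b : ℝ} (hσ : 0 < σ) (ha : 0 < a) (hb : 0 < b) (z : ℝ) :
    twoPiece f σ a b z ≤ 2 / (σ * (a + b)) * f (z / (σ * max a b)) := by
  have hscale : ∀ c, 0 < c → c ≤ max a b → f (z / (σ * c)) ≤ f (z / (σ * max a b)) :=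
    fun c hc hcm => hf _ _ <| by
      simp only [abs_div, abs_of_pos (mul_pos hσ hc), abs_of_pos (mul_pos hσ (hc.trans_le hcm))]
      gcongr
  unfold twoPiece
  split_ifs
  · exact mul_le_mul_of_nonneg_left (hscale b hb (le_max_right a b)) (by positivity)
  · exact mul_le_mul_of_nonneg_left (hscale a ha (le_max_left a b)) (by positivity)

theorem baseline_pos (z : ℝ) : 0 < baseline z := by
  unfold baseline
  positivity

theorem baseline_le_of_abs_le {x z : ℝ} (h : |x| ≤ |z|) : baseline z ≤ baseline x := by
  have hsq : x ^ 2 ≤ z ^ 2 := sq_le_sq.mpr h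
  unfold baseline
  gcongr ?_ * exp ?_
  linarith

theorem prod_baseline {ι : Type*} [Fintype ι] (z : ι → ℝ) :
    ∏ j, baseline (z j) =
      ((2 * π) ^ (-(1 / 2 : ℝ))) ^ Fintype.card ι * exp (-(∑ j, z j ^ 2) / 2) := by
  simp only [baseline, Finset.prod_mul_distrib, Finset.prod_const, Finset.card_univ,
    ← exp_sum, neg_div, Finset.sum_neg_distrib, Finset.sum_div]

theorem lintegral_exp_neg_mul_sum_sq {ι : Type*} [Fintype ι] {c : ℝ} (hc : 0 < c) (t : ι → ℝ) :
    ∫⁻ β : ι → ℝ, ENNReal.ofReal (exp (-(c * ∑ i, (β i - t i) ^ 2))) =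
      ENNReal.ofReal (√(π / c) ^ Fintype.card ι) := by
  let f : ι → ℝ → ℝ := fun i x => exp (-c * (x - t i) ^ 2)
  have hprod : ∀ β : ι → ℝ, exp (-(c * ∑ i, (β i - t i) ^ 2)) = ∏ i, f i (β i) := by
    intro β
    rw [← exp_sum, Finset.mul_sum, ← Finset.sum_neg_distrib]
    simp only [neg_mul]
  have hf : Integrable fun β : ι → ℝ => ∏ i, f i (β i) :=
    Integrable.fintype_prod fun i => (integrable_exp_neg_mul_sq hc).comp_sub_right (t i)
  simp_rw [hprod]
  rw [← ofReal_integral_eq_lintegral_ofReal hf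
      (ae_of_all _ fun β => Finset.prod_nonneg fun i _ => (exp_pos _).le),
    integral_fintype_prod_volume_eq_prod]
  simp only [f, integral_sub_right_eq_self (fun x => exp (-c * x ^ 2)), integral_gaussian,
    Finset.prod_const, Finset.card_univ]

theorem integrableOn_rpow_mul_exp_neg_div_sq {s c : ℝ} (hs : s < -1) (hc : 0 < c) :
    IntegrableOn (fun τ : ℝ => τ ^ s * exp (-c / τ ^ 2)) (Ioi 0) := by
  have hf := integrableOn_rpow_mul_exp_neg_mul_sq hc (s := -s - 2) (by linarith)
  refine ((integrableOn_Ioi_comp_rpow_iff' _ (p := -1) (by norm_num)).mpr hf).congr_fun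
    (fun x (hx : 0 < x) => ?_) measurableSet_Ioi
  dsimp only
  rw [smul_eq_mul, rpow_neg_one, inv_rpow hx.le, ← rpow_neg hx.le, inv_pow, ← mul_assoc,
    ← rpow_add hx, show -1 - 1 + -(-s - 2) = s by ring, div_eq_mul_inv]

theorem lintegral_comp_mul_left_Ioi (g : ℝ → ENNReal) (a : ℝ) {b : ℝ} (hb : 0 < b) :
    ∫⁻ x in Ioi a, g (b * x) = ENNReal.ofReal b⁻¹ * ∫⁻ x in Ioi (b * a), g x := by
  let e := MeasurableEquiv.mulLeft₀ b hb.ne'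
  have hpre : e ⁻¹' Ioi (b * a) = Ioi a := by
    rw [show ⇑e = (b * ·) from rfl, preimage_const_mul_Ioi₀ _ hb, mul_div_cancel_left₀ _ hb.ne']
  have hmap : (volume : Measure ℝ).map e = ENNReal.ofReal |b⁻¹| • volume :=
    Real.map_volume_mul_left hb.ne'
  calc ∫⁻ x in Ioi a, g (b * x) = ∫⁻ x, g x ∂((volume.restrict (e ⁻¹' Ioi (b * a))).map e) := by
        rw [lintegral_map_equiv, hpre]; rfl
    _ = ENNReal.ofReal b⁻¹ * ∫⁻ x in Ioi (b * a), g x := by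
        rw [← e.restrict_map, hmap, Measure.restrict_smul, lintegral_smul_measure,
          abs_of_pos (inv_pos.mpr hb), smul_eq_mul]

section Likelihood

variable {n p : ℕ} {r : (Fin p → ℝ) → Fin n → ℝ} {t : Fin p → ℝ} {d lam : ℝ}

theorem prod_twoPiece_baseline_le
    (hr : ∀ β, d ^ 2 + lam * ∑ i, (β i - t i) ^ 2 ≤ ∑ j, r β j ^ 2)
    {σ A B : ℝ} (hσ : 0 < σ) (hA : 0 < A) (hB : 0 < B) (β : Fin p → ℝ) :
    ∏ j, twoPiece baseline σ A B (r β j) ≤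
      (2 / (σ * (A + B))) ^ n * ((2 * π) ^ (-(1 / 2 : ℝ))) ^ n *
        exp (-(d ^ 2 / 2) / (σ * max A B) ^ 2) *
        exp (-(lam / (2 * (σ * max A B) ^ 2) * ∑ i, (β i - t i) ^ 2)) := by
  set s := σ * max A B
  have hexp : exp (-(∑ j, (r β j / s) ^ 2) / 2) ≤
      exp (-(d ^ 2 / 2) / s ^ 2) * exp (-(lam / (2 * s ^ 2) * ∑ i, (β i - t i) ^ 2)) := by
    rw [← exp_add, exp_le_exp,
      show -(∑ j, (r β j / s) ^ 2) / 2 = -((∑ j, r β j ^ 2) / (2 * s ^ 2)) by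
        simp only [div_pow, ← Finset.sum_div]; ring,
      show -(d ^ 2 / 2) / s ^ 2 + -(lam / (2 * s ^ 2) * ∑ i, (β i - t i) ^ 2) =
        -((d ^ 2 + lam * ∑ i, (β i - t i) ^ 2) / (2 * s ^ 2)) by ring]
    exact neg_le_neg (div_le_div_of_nonneg_right (hr β) (by positivity))
  calc ∏ j, twoPiece baseline σ A B (r β j) ≤ ∏ j, 2 / (σ * (A + B)) * baseline (r β j / s) :=
      Finset.prod_le_prod
        (fun j _ => twoPiece_nonneg (fun z => (baseline_pos z).le) hσ.le (by positivity) _)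
        (fun j _ => twoPiece_le_of_abs_antitone (fun _ _ => baseline_le_of_abs_le) hσ hA hB _)
    _ = (2 / (σ * (A + B))) ^ n * ((2 * π) ^ (-(1 / 2 : ℝ))) ^ n *
          exp (-(∑ j, (r β j / s) ^ 2) / 2) := by
      rw [Finset.prod_mul_distrib, prod_baseline, Finset.prod_const, Finset.card_univ,
        Fintype.card_fin, mul_assoc]
    _ ≤ _ := by
      rw [mul_assoc _ (exp _)]
      gcongr

theorem lintegral_prod_twoPiece_baseline_le (hlam : 0 < lam)
    (hr : ∀ β, d ^ 2 + lam * ∑ i, (β i - t i) ^ 2 ≤ ∑ j, r β j ^ 2)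
    {σ A B : ℝ} (hσ : 0 < σ) (hA : 0 < A) (hB : 0 < B) :
    ∫⁻ β, ENNReal.ofReal (∏ j, twoPiece baseline σ A B (r β j)) ≤
      ENNReal.ofReal ((2 / (σ * (A + B))) ^ n * ((2 * π) ^ (-(1 / 2 : ℝ))) ^ n *
        exp (-(d ^ 2 / 2) / (σ * max A B) ^ 2) * (√(2 * π / lam) * (σ * max A B)) ^ p) := by
  set s := σ * max A B
  have hs : 0 < s := mul_pos hσ (lt_max_of_lt_left hA)
  set c := lam / (2 * s ^ 2)
  set K := (2 / (σ * (A + B))) ^ n * ((2 * π) ^ (-(1 / 2 : ℝ))) ^ n * exp (-(d ^ 2 / 2) / s ^ 2)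
  have hK : 0 ≤ K := by positivity
  have hsqrt : √(π / c) = √(2 * π / lam) * s := by
    rw [show π / c = 2 * π / lam * s ^ 2 by simp only [c]; field_simp, sqrt_mul (by positivity),
      sqrt_sq hs.le]
  calc ∫⁻ β, ENNReal.ofReal (∏ j, twoPiece baseline σ A B (r β j))
      ≤ ∫⁻ β : Fin p → ℝ, ENNReal.ofReal K * ENNReal.ofReal (exp (-(c * ∑ i, (β i - t i) ^ 2))) :=
        lintegral_mono fun β => (ENNReal.ofReal_le_ofReal
          (prod_twoPiece_baseline_le hr hσ hA hB β)).trans_eq (ENNReal.ofReal_mul hK)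
    _ = ENNReal.ofReal (K * (√(2 * π / lam) * s) ^ p) := by
        rw [lintegral_const_mul' _ _ ENNReal.ofReal_ne_top,
          lintegral_exp_neg_mul_sum_sq (by positivity), Fintype.card_fin, hsqrt,
          ← ENNReal.ofReal_mul hK]

theorem lintegral_twoPiece_likelihood_le (hlam : 0 < lam)
    (hr : ∀ β, d ^ 2 + lam * ∑ i, (β i - t i) ^ 2 ≤ ∑ j, r β j ^ 2)
    {σ A B : ℝ} (hσ : 0 < σ) (hA : 0 < A) (hB : 0 < B) (q : ℝ) {w : ℝ} (hw : 0 ≤ w) :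
    ∫⁻ β, ENNReal.ofReal ((∏ j, twoPiece baseline σ A B (r β j)) * σ ^ (-q) * w) ≤
      ENNReal.ofReal (2 ^ n * ((2 * π) ^ (-(1 / 2 : ℝ))) ^ n * √(2 * π / lam) ^ p *
          (max A B ^ ((n : ℝ) + q) / (A + B) ^ n * w)) *
        ENNReal.ofReal ((max A B * σ) ^ ((p : ℝ) - n - q) *
          exp (-(d ^ 2 / 2) / (max A B * σ) ^ 2)) := by
  set m := max A B
  have hm : 0 < m := lt_max_of_lt_left hA
  have hσqw : 0 ≤ σ ^ (-q) * w := mul_nonneg (rpow_nonneg hσ.le _) hw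
  have hpow : (σ ^ n)⁻¹ * σ ^ (-q) * (m * σ) ^ p =
      m ^ ((n : ℝ) + q) * (m * σ) ^ ((p : ℝ) - n - q) := by
    rw [show (p : ℝ) - n - q = p - (n + q) by ring, rpow_sub (by positivity), rpow_natCast,
      mul_rpow hm.le hσ.le, rpow_add hσ, rpow_neg hσ.le, rpow_natCast]
    field_simp
  calc ∫⁻ β, ENNReal.ofReal ((∏ j, twoPiece baseline σ A B (r β j)) * σ ^ (-q) * w)
      = (∫⁻ β, ENNReal.ofReal (∏ j, twoPiece baseline σ A B (r β j))) *
          ENNReal.ofReal (σ ^ (-q) * w) := by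
        simp_rw [mul_assoc _ (σ ^ (-q)), ENNReal.ofReal_mul' hσqw]
        exact lintegral_mul_const' _ _ ENNReal.ofReal_ne_top
    _ ≤ ENNReal.ofReal ((2 / (σ * (A + B))) ^ n * ((2 * π) ^ (-(1 / 2 : ℝ))) ^ n *
          exp (-(d ^ 2 / 2) / (σ * m) ^ 2) * (√(2 * π / lam) * (σ * m)) ^ p) *
          ENNReal.ofReal (σ ^ (-q) * w) := by
        gcongr
        exact lintegral_prod_twoPiece_baseline_le hlam hr hσ hA hB
    _ = _ := by
        rw [← ENNReal.ofReal_mul' hσqw, ← ENNReal.ofReal_mul (by positivity), mul_comm σ m]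
        congr 1
        calc _ = 2 ^ n * ((2 * π) ^ (-(1 / 2 : ℝ))) ^ n * √(2 * π / lam) ^ p * (w / (A + B) ^ n) *
              exp (-(d ^ 2 / 2) / (m * σ) ^ 2) * ((σ ^ n)⁻¹ * σ ^ (-q) * (m * σ) ^ p) := by
              rw [div_pow, mul_pow σ]
              ring
          _ = _ := by
              rw [hpow]
              ring

theorem exists_lintegral_twoPiece_likelihood_le (hd : 0 < d) (hlam : 0 < lam)
    (hr : ∀ β, d ^ 2 + lam * ∑ i, (β i - t i) ^ 2 ≤ ∑ j, r β j ^ 2)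
    {q : ℝ} (hnpq : (p : ℝ) + 1 - q < n) :
    ∃ C < ⊤, ∀ A B w : ℝ, 0 < A → 0 < B → 0 ≤ w →
      ∫⁻ σ in Ioi 0, ∫⁻ β, ENNReal.ofReal ((∏ j, twoPiece baseline σ A B (r β j)) * σ ^ (-q) * w)
        ≤ C * ENNReal.ofReal (max A B ^ ((n : ℝ) + q - 1) / (A + B) ^ n * w) := by
  set K := 2 ^ n * ((2 * π) ^ (-(1 / 2 : ℝ))) ^ n * √(2 * π / lam) ^ p
  have hK : 0 ≤ K := by positivity
  let g : ℝ → ENNReal := fun τ =>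
    ENNReal.ofReal (τ ^ ((p : ℝ) - n - q) * exp (-(d ^ 2 / 2) / τ ^ 2))
  have hg : ∫⁻ τ in Ioi 0, g τ < ⊤ :=
    (integrableOn_rpow_mul_exp_neg_div_sq (by linarith) (by positivity)).setLIntegral_lt_top
  refine ⟨ENNReal.ofReal K * ∫⁻ τ in Ioi 0, g τ, ENNReal.mul_lt_top ENNReal.ofReal_lt_top hg,
    fun A B w hA hB hw => ?_⟩
  set m := max A B
  have hm : 0 < m := lt_max_of_lt_left hA
  calc ∫⁻ σ in Ioi 0, ∫⁻ β, ENNReal.ofReal ((∏ j, twoPiece baseline σ A B (r β j)) * σ ^ (-q) * w)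
      ≤ ∫⁻ σ in Ioi 0, ENNReal.ofReal (K * (m ^ ((n : ℝ) + q) / (A + B) ^ n * w)) * g (m * σ) :=
        setLIntegral_mono' measurableSet_Ioi fun σ hσ =>
          lintegral_twoPiece_likelihood_le hlam hr hσ hA hB q hw
    _ = ENNReal.ofReal (K * (m ^ ((n : ℝ) + q) / (A + B) ^ n * w)) *
          (ENNReal.ofReal m⁻¹ * ∫⁻ τ in Ioi 0, g τ) := by
        rw [lintegral_const_mul' _ _ ENNReal.ofReal_ne_top, lintegral_comp_mul_left_Ioi g 0 hm,
          mul_zero]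
    _ = ENNReal.ofReal K * (∫⁻ τ in Ioi 0, g τ) *
          ENNReal.ofReal (m ^ ((n : ℝ) + q - 1) / (A + B) ^ n * w) := by
        rw [← mul_assoc, ← ENNReal.ofReal_mul (by positivity), rpow_sub hm, rpow_one,
          show K * (m ^ ((n : ℝ) + q) / (A + B) ^ n * w) * m⁻¹ =
            K * (m ^ ((n : ℝ) + q) / m / (A + B) ^ n * w) by ring, ENNReal.ofReal_mul hK]
        ring

end Likelihood

theorem posterior_proper_normal_general
    (n p : ℕ) (q : ℝ)
    (X : Matrix (Fin n) (Fin p) ℝ) (hX : X.rank = p)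
    (y : Fin n → ℝ)
    (Γ : Set ℝ) (hΓ : MeasurableSet Γ)
    -- parameterisation functions
    (a b : ℝ → ℝ)
    (ha_pos : ∀ γ ∈ Γ, 0 < a γ) (hb_pos : ∀ γ ∈ Γ, 0 < b γ)
    -- proper prior density on Γ
    (πγ : ℝ → ℝ) (hπγ_nonneg : ∀ γ, 0 ≤ πγ γ)
    -- y does not lie in the column space of X
    (hy : ¬ ∃ β : Fin p → ℝ, ∀ j, y j = ∑ i, X j i * β i)
    -- n > p + 1 - q
    (hnp : (p : ℝ) + 1 - q < n)
    -- condition (iii)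
    (hiii : ∫⁻ γ in Γ, ENNReal.ofReal
        (max (a γ) (b γ) ^ ((n : ℝ) + q - 1) / (a γ + b γ) ^ n * πγ γ) < ⊤) :
    -- conclusion: the posterior of (β, σ, γ) is proper
    ∫⁻ γ in Γ, ∫⁻ σ in Set.Ioi (0 : ℝ), ∫⁻ β : Fin p → ℝ,
        ENNReal.ofReal ((∏ j, twoPiece baseline σ (a γ) (b γ) (y j - ∑ i, X j i * β i)) *
          σ ^ (-q) * πγ γ) < ⊤ := by
  obtain ⟨t, d, lam, hd, hlam, hr⟩ := Matrix.exists_sq_add_le_sum_sq_sub_mulVec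
    (Matrix.mulVec_injective_of_rank_eq (X := X) (by simpa using hX))
    fun ⟨β, hβ⟩ => hy ⟨β, fun j => (congrFun hβ j).symm⟩
  obtain ⟨C, hC, hbound⟩ := exists_lintegral_twoPiece_likelihood_le hd hlam hr hnp
  calc _ ≤ ∫⁻ γ in Γ, C * ENNReal.ofReal
          (max (a γ) (b γ) ^ ((n : ℝ) + q - 1) / (a γ + b γ) ^ n * πγ γ) :=
        setLIntegral_mono' hΓ fun γ hγ =>
          hbound _ _ _ (ha_pos γ hγ) (hb_pos γ hγ) (hπγ_nonneg γ)
    _ = C * ∫⁻ γ in Γ, ENNReal.ofReal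
          (max (a γ) (b γ) ^ ((n : ℝ) + q - 1) / (a γ + b γ) ^ n * πγ γ) :=
        lintegral_const_mul' _ _ hC.ne
    _ < ⊤ := ENNReal.mul_lt_top hC hiii

/-- Corollary 2 (normal baseline): in the two-piece linear regression model with the
normal baseline density and prior `π(β,σ,γ) ∝ σ^{-q} π(γ)`, if `y` is not in the column
space of `X`, `n > p + 1 - q`, and condition (iii) holds, then the posterior of
`(β, σ, γ)` is proper. -/
theorem posterior_proper_normal
    (n p : ℕ) (q : ℝ) (hq : 0 ≤ q)
    (X : Matrix (Fin n) (Fin p) ℝ) (hX : X.rank = p)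
    (y : Fin n → ℝ)
    (Γ : Set ℝ) (hΓ : MeasurableSet Γ)
    -- parameterisation functions
    (a b : ℝ → ℝ) (ha_meas : Measurable a) (hb_meas : Measurable b)
    (ha_pos : ∀ γ ∈ Γ, 0 < a γ) (hb_pos : ∀ γ ∈ Γ, 0 < b γ)
    -- proper prior density on Γ
    (πγ : ℝ → ℝ) (hπγ_meas : Measurable πγ) (hπγ_nonneg : ∀ γ, 0 ≤ πγ γ)
    (hπγ_proper : ∫⁻ γ in Γ, ENNReal.ofReal (πγ γ) = 1)
    -- y does not lie in the column space of X
    (hy : ¬ ∃ β : Fin p → ℝ, ∀ j, y j = ∑ i, X j i * β i)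
    -- n > p + 1 - q
    (hnp : (p : ℝ) + 1 - q < n)
    -- condition (iii)
    (hiii : ∫⁻ γ in Γ, ENNReal.ofReal
        (max (a γ) (b γ) ^ ((n : ℝ) + q - 1) / (a γ + b γ) ^ n * πγ γ) < ⊤) :
    -- conclusion: the posterior of (β, σ, γ) is proper
    ∫⁻ γ in Γ, ∫⁻ σ in Set.Ioi (0 : ℝ), ∫⁻ β : Fin p → ℝ,
        ENNReal.ofReal ((∏ j, twoPiece baseline σ (a γ) (b γ) (y j - ∑ i, X j i * β i)) *
          σ ^ (-q) * πγ γ) < ⊤ :=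
  posterior_proper_normal_general n p q X hX y Γ hΓ a b ha_pos hb_pos πγ hπγ_nonneg hy hnp hiii
end

section
/- The skewness-prior elicitation of Rubio and Steel applied to the Mudholkar–Hutson parameterisation with a Beta(1/2,1/2) prior yields the Jeffreys prior of γ: with a(γ) = 1 − γ and b(γ) = 1 + γ for γ ∈ (−1,1), and a₀ = b₀ = 1/2, the elicited prior density expression |a′(γ)b(γ) − a(γ)b′(γ)| · (a(γ)+b(γ))^{−(a₀+b₀)} · a(γ)^{a₀−1} · b(γ)^{b₀−1} equals (1 − γ²)^{−1/2} for every γ ∈ (−1,1). -/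
/-!
For `a(γ) = 1 - γ`, `b(γ) = 1 + γ` both `|a′b - ab′|` and `a + b` are the constant `2`, so the
elicited prior is `2 ^ (1 - (a₀ + b₀)) (1 - γ) ^ (a₀ - 1) (1 + γ) ^ (b₀ - 1)`. At
`a₀ = b₀ = 1/2` the constant is `1` and the two powers combine to `(1 - γ²) ^ (-1/2)`.
-/

open Real

noncomputable def elicitedPrior (a b : ℝ → ℝ) (a₀ b₀ γ : ℝ) : ℝ :=
  |deriv a γ * b γ - a γ * deriv b γ| * (a γ + b γ) ^ (-(a₀ + b₀)) *
    a γ ^ (a₀ - 1) * b γ ^ (b₀ - 1)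

theorem elicitedPrior_mudholkarHutson (a₀ b₀ γ : ℝ) :
    elicitedPrior (1 - ·) (1 + ·) a₀ b₀ γ =
      2 ^ (1 - (a₀ + b₀)) * (1 - γ) ^ (a₀ - 1) * (1 + γ) ^ (b₀ - 1) := by
  have hwronskian : |deriv (1 - ·) γ * (1 + γ) - (1 - γ) * deriv (1 + ·) γ| = 2 := by
    rw [deriv_const_sub_id, deriv_const_add_id]
    ring_nf
    norm_num
  have hsum : (1 - γ) + (1 + γ) = 2 := by ring
  rw [elicitedPrior, hwronskian, hsum, rpow_sub two_pos, rpow_one, div_eq_mul_inv,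
    ← rpow_neg two_pos.le]

/-- The skewness-prior elicitation of Rubio and Steel applied to the Mudholkar–Hutson
parameterisation `a(γ) = 1 - γ`, `b(γ) = 1 + γ` on `(-1, 1)` with a `Beta(1/2, 1/2)` prior
(`a₀ = b₀ = 1/2`) yields the Jeffreys prior `(1 - γ²)^{-1/2}` of `γ`. -/
theorem mudholkar_hutson_beta_half_gives_jeffreys
    (a b : ℝ → ℝ) (ha : ∀ γ, a γ = 1 - γ) (hb : ∀ γ, b γ = 1 + γ)
    (a₀ b₀ : ℝ) (ha₀ : a₀ = 1 / 2) (hb₀ : b₀ = 1 / 2) :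
    ∀ γ ∈ Set.Ioo (-1 : ℝ) 1,
      |deriv a γ * b γ - a γ * deriv b γ| * (a γ + b γ) ^ (-(a₀ + b₀)) *
          a γ ^ (a₀ - 1) * b γ ^ (b₀ - 1) =
        (1 - γ ^ 2) ^ (-(1 / 2) : ℝ) := by
  obtain rfl : a = (1 - ·) := funext ha
  obtain rfl : b = (1 + ·) := funext hb
  subst ha₀ hb₀
  rintro γ ⟨hγ_lower, hγ_upper⟩
  change elicitedPrior _ _ _ _ γ = _
  calc elicitedPrior (1 - ·) (1 + ·) (1 / 2) (1 / 2) γ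
      = 2 ^ (1 - (1 / 2 + 1 / 2) : ℝ) * (1 - γ) ^ (1 / 2 - 1 : ℝ) * (1 + γ) ^ (1 / 2 - 1 : ℝ) :=
        elicitedPrior_mudholkarHutson _ _ γ
    _ = ((1 - γ) * (1 + γ)) ^ (-(1 / 2) : ℝ) := by
        rw [mul_rpow (by linarith) (by linarith)]
        norm_num
    _ = (1 - γ ^ 2) ^ (-(1 / 2) : ℝ) := by ring_nf
end
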